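/- arXiv:2211.16714 — 2 statements merged into one kernel-verified Lean document; each statement's English description precedes it below -/
import Mathlib

section
/- (Active groups bounded by truncation level) In the setting of the slice sampler, suppose group indices g₁,...,g_N satisfy u_i < π_{g_i} for every i, let K^a = max_i g_i, let u* = min_i u_i, and let K* be the smallest k with u* > 1 − Σ_{j=1}^k π_j. Then K^a ≤ K*. -/
open Finset

theorem le_of_one_sub_sum_Icc_lt {π : ℕ → ℝ} (hπ : ∀ j, 0 ≤ π j) {k m : ℕ}
    (hsum : ∑ j ∈ Icc 1 m, π j ≤ 1) (h : 1 - ∑ j ∈ Icc 1 k, π j < π m) : m ≤ k := by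
  by_contra! hkm
  have hm : m ∉ Icc 1 k := by simp only [mem_Icc]; omega
  have hsub : insert m (Icc 1 k) ⊆ Icc 1 m := by
    intro x hx
    simp only [mem_insert, mem_Icc] at hx ⊢
    omega
  have : π m + ∑ j ∈ Icc 1 k, π j ≤ ∑ j ∈ Icc 1 m, π j := by
    rw [← sum_insert hm]
    exact sum_le_sum_of_subset_of_nonneg hsub fun j _ _ => hπ j
  linarith

theorem stmt9_general (N : ℕ) (u : Fin N → ℝ)
    (π : ℕ → ℝ) (hπ : ∀ j, 0 ≤ π j)
    (hsum : ∀ k, ∑ j ∈ Finset.Icc 1 k, π j ≤ 1)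
    (g : Fin N → ℕ) (hg : ∀ i, u i < π (g i))
    (Ka : ℕ) (hKa : IsGreatest (Set.range g) Ka)
    (ustar : ℝ) (hustar : IsLeast (Set.range u) ustar)
    (Kstar : ℕ)
    (hK2 : ustar > 1 - ∑ j ∈ Finset.Icc 1 Kstar, π j) :
    Ka ≤ Kstar := by
  obtain ⟨i, rfl⟩ := hKa.1
  have hui : ustar ≤ u i := hustar.2 ⟨i, rfl⟩
  exact le_of_one_sub_sum_Icc_lt hπ (hsum _) (by linarith [hg i])

theorem stmt9 (N : ℕ) (hN : 0 < N) (u : Fin N → ℝ) (hu : ∀ i, u i ∈ Set.Ioc (0:ℝ) 1)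
    (π : ℕ → ℝ) (hπ : ∀ j, 0 ≤ π j)
    (hsum : ∀ k, ∑ j ∈ Finset.Icc 1 k, π j ≤ 1)
    (g : Fin N → ℕ) (hg : ∀ i, u i < π (g i))
    (Ka : ℕ) (hKa : IsGreatest (Set.range g) Ka)
    (ustar : ℝ) (hustar : IsLeast (Set.range u) ustar)
    (Kstar : ℕ) (hK1 : 0 < Kstar)
    (hK2 : ustar > 1 - ∑ j ∈ Finset.Icc 1 Kstar, π j)
    (hK3 : ∀ k, 0 < k → ustar > 1 - ∑ j ∈ Finset.Icc 1 k, π j → Kstar ≤ k) :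
    Ka ≤ Kstar :=
  stmt9_general N u π hπ hsum g hg Ka hKa ustar hustar Kstar hK2
end

section
/- (Swap invariance of the constraint energy) Let N ≥ 2, let W : Fin N × Fin N → ℝ be symmetric (W_{mn} = W_{nm}) with zero diagonal (W_{nn} = 0), and let j ≠ k be two indices with W_{jn} = W_{kn} for all n. For a group assignment G : Fin N → ℕ define δ_{mn}(G) = 1 if G(m) = G(n) and −1 otherwise, and let s_{jk}(G) be the assignment obtained from G by swapping the values at j and k. Then Σ_{m,n} W_{mn} δ_{mn}(G) = Σ_{m,n} W_{mn} δ_{mn}(s_{jk}(G)). -/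
open Equiv

section SwapInvariance

variable {ι R : Type*} [DecidableEq ι]

theorem apply_swap_left_of_row_eq (W : ι → ι → R) {j k : ι} (hW : ∀ n, W j n = W k n)
    (a b : ι) : W (swap j k a) b = W a b := by
  rcases eq_or_ne a j with rfl | haj
  · rw [swap_apply_left, hW]
  rcases eq_or_ne a k with rfl | hak
  · rw [swap_apply_right, hW]
  · rw [swap_apply_of_ne_of_ne haj hak]

/-- Equal rows of a symmetric matrix give equal columns, so the swap may be applied to both
indices at once. -/
theorem apply_swap_swap_of_row_eq (W : ι → ι → R) (hsymm : ∀ m n, W m n = W n m)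
    {j k : ι} (hW : ∀ n, W j n = W k n) (a b : ι) :
    W (swap j k a) (swap j k b) = W a b := by
  rw [apply_swap_left_of_row_eq W hW, hsymm, apply_swap_left_of_row_eq W hW, hsymm]

end SwapInvariance

theorem Equiv.sum_sum_comp {ι κ M : Type*} [Fintype ι] [Fintype κ] [AddCommMonoid M]
    (e : ι ≃ κ) (F : κ → κ → M) : ∑ m, ∑ n, F (e m) (e n) = ∑ m, ∑ n, F m n := by
  rw [← Equiv.sum_comp e (fun m => ∑ n, F m n)]
  exact Fintype.sum_congr _ _ fun m => Equiv.sum_comp e (F (e m))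

theorem stmt12_general (N : ℕ) (W : Fin N → Fin N → ℝ)
    (hsymm : ∀ m n, W m n = W n m)
    (j k : Fin N) (hW : ∀ n, W j n = W k n)
    (G : Fin N → ℕ) :
    (∑ m, ∑ n, W m n * (if G m = G n then (1:ℝ) else -1)) =
    (∑ m, ∑ n, W m n *
      (if G (Equiv.swap j k m) = G (Equiv.swap j k n) then (1:ℝ) else -1)) := by
  calc (∑ m, ∑ n, W m n * (if G m = G n then (1:ℝ) else -1))
      = ∑ m, ∑ n, W (swap j k m) (swap j k n) *
          (if G (swap j k m) = G (swap j k n) then (1:ℝ) else -1) :=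
        (Equiv.sum_sum_comp (swap j k) fun m n => W m n * _).symm
    _ = _ := by simp only [apply_swap_swap_of_row_eq W hsymm hW]

theorem stmt12 (N : ℕ) (W : Fin N → Fin N → ℝ)
    (hsymm : ∀ m n, W m n = W n m) (hdiag : ∀ n, W n n = 0)
    (j k : Fin N) (hjk : j ≠ k) (hW : ∀ n, W j n = W k n)
    (G : Fin N → ℕ) :
    (∑ m, ∑ n, W m n * (if G m = G n then (1:ℝ) else -1)) =
    (∑ m, ∑ n, W m n *
      (if G (Equiv.swap j k m) = G (Equiv.swap j k n) then (1:ℝ) else -1)) :=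
  stmt12_general N W hsymm j k hW G
end
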